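/- For |q|<1, the identity ∑_{n∈ℤ} sgn(n) q^{n(3n-1)/2} = -∑_{n≥1} (-1)^n q^{n(n+1)/2}/(-q;q)_n holds, where the left side equals ∑_{n≥1}(1-q^n)q^{n(3n-1)/2}. -/

import Mathlib

/-!
Splitting the bilateral sum at `0` gives the first identity, since the exponents at `n` and `-n`
differ by `n`.

For the second, let `P_n = (-q;q)_n` and `G_N(x) = ∑_{k<N} (-x)^k P_k`. By induction on `N`,
`(1 + x) G_N(x) + q x G_{N+1}(q x) = 1 - (-x)^N (1 - x q^{N+1}) P_N`, and at `x = q^{N+1}` this says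
that the `N`-th partial sums of the two series differ exactly by
`R_N = (-1)^{N+1} q^{(N+1)(N+2)/2} G_N(q^{N+1}) / P_N`. Finally `R_N → 0`: `|G_N(q^{N+1})| ≤ 2^N`
and `|P_N| ≥ (1-|q|)^N`, while `q^{(N+1)(N+2)/2}` decays faster than any geometric sequence.
-/

open scoped BigOperators

/-- The finite q-Pochhammer symbol `(a;q)_n = ∏_{j=0}^{n-1} (1 - a q^j)`. -/
noncomputable def qPoch (a q : ℂ) (n : ℕ) : ℂ := ∏ j ∈ Finset.range n, (1 - a * q ^ j)

open Filter Topology Finset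

lemma qPoch_succ (a q : ℂ) (n : ℕ) : qPoch a q (n + 1) = qPoch a q n * (1 - a * q ^ n) :=
  prod_range_succ _ n

lemma norm_mul_pow_le {q : ℂ} (a : ℂ) (hq : ‖q‖ ≤ 1) (j : ℕ) : ‖a * q ^ j‖ ≤ ‖a‖ := by
  rw [norm_mul, norm_pow]
  exact mul_le_of_le_one_right (norm_nonneg a) (pow_le_one₀ (norm_nonneg q) hq)

lemma one_sub_norm_pow_le_norm_qPoch {a q : ℂ} (ha : ‖a‖ ≤ 1) (hq : ‖q‖ ≤ 1) (n : ℕ) :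
    (1 - ‖a‖) ^ n ≤ ‖qPoch a q n‖ := by
  rw [qPoch, norm_prod]
  calc (1 - ‖a‖) ^ n = ∏ _j ∈ range n, (1 - ‖a‖) := by rw [prod_const, card_range]
    _ ≤ ∏ j ∈ range n, ‖1 - a * q ^ j‖ := by
      refine prod_le_prod (fun _ _ ↦ sub_nonneg.2 ha) fun j _ ↦ ?_
      calc 1 - ‖a‖ ≤ ‖(1 : ℂ)‖ - ‖a * q ^ j‖ := by rw [norm_one]; linarith [norm_mul_pow_le a hq j]
        _ ≤ ‖1 - a * q ^ j‖ := norm_sub_norm_le _ _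

lemma norm_qPoch_le {q : ℂ} (a : ℂ) (hq : ‖q‖ ≤ 1) (n : ℕ) : ‖qPoch a q n‖ ≤ (1 + ‖a‖) ^ n := by
  rw [qPoch, norm_prod]
  calc ∏ j ∈ range n, ‖1 - a * q ^ j‖ ≤ ∏ _j ∈ range n, (1 + ‖a‖) := by
        refine prod_le_prod (fun _ _ ↦ norm_nonneg _) fun j _ ↦ ?_
        calc ‖1 - a * q ^ j‖ ≤ ‖(1 : ℂ)‖ + ‖a * q ^ j‖ := norm_sub_le _ _
          _ ≤ 1 + ‖a‖ := by rw [norm_one]; linarith [norm_mul_pow_le a hq j]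
    _ = (1 + ‖a‖) ^ n := by rw [prod_const, card_range]

lemma qPoch_ne_zero {a q : ℂ} (ha : ‖a‖ < 1) (hq : ‖q‖ ≤ 1) (n : ℕ) : qPoch a q n ≠ 0 :=
  norm_pos_iff.1 <| (pow_pos (sub_pos.2 ha) n).trans_le (one_sub_norm_pow_le_norm_qPoch ha.le hq n)

lemma triangle_succ (N : ℕ) : (N + 2) * (N + 3) / 2 = (N + 1) * (N + 2) / 2 + (N + 2) := by
  rw [show (N + 2) * (N + 3) = (N + 1) * (N + 2) + 2 * (N + 2) by ring,
    Nat.add_mul_div_left _ _ two_pos]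

lemma pentagonal_eq_triangle_add (N : ℕ) :
    (N + 1) * (3 * (N + 1) - 1) / 2 = (N + 1) * (N + 2) / 2 + N * (N + 1) := by
  rw [show (N + 1) * (3 * (N + 1) - 1) = (N + 1) * (N + 2) + 2 * (N * (N + 1)) by
    rw [show 3 * (N + 1) - 1 = 3 * N + 2 by omega]; ring, Nat.add_mul_div_left _ _ two_pos]

lemma mul_le_triangle {M N : ℕ} (h : 2 * M ≤ N + 2) : M * (N + 1) ≤ (N + 1) * (N + 2) / 2 := by
  rw [Nat.le_div_iff_mul_le two_pos]
  nlinarith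

lemma le_pentagonal (N : ℕ) : N + 1 ≤ (N + 1) * (3 * (N + 1) - 1) / 2 := by
  have := mul_le_triangle (M := 1) (N := N) (by omega)
  rw [pentagonal_eq_triangle_add]
  omega

lemma int_pentagonal_natCast (n : ℕ) :
    ((n : ℤ) + 1) * (3 * ((n : ℤ) + 1) - 1) / 2 = (((n + 1) * (3 * (n + 1) - 1) / 2 : ℕ) : ℤ) := by
  push_cast [Nat.cast_sub (show 1 ≤ 3 * (n + 1) by omega)]
  ring_nf

lemma int_pentagonal_neg (n : ℕ) :
    -((n : ℤ) + 1) * (3 * -((n : ℤ) + 1) - 1) / 2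
      = (((n + 1) * (3 * (n + 1) - 1) / 2 + (n + 1) : ℕ) : ℤ) := by
  rw [show -((n : ℤ) + 1) * (3 * -((n : ℤ) + 1) - 1)
      = ((n : ℤ) + 1) * (3 * ((n : ℤ) + 1) - 1) + 2 * ((n : ℤ) + 1) by ring,
    Int.add_mul_ediv_left _ _ two_ne_zero, int_pentagonal_natCast]
  push_cast
  ring

lemma summable_pow_of_le {q : ℂ} (hq : ‖q‖ < 1) {e : ℕ → ℕ} (he : ∀ n, n ≤ e n) :
    Summable fun n ↦ q ^ e n :=
  Summable.of_norm_bounded (summable_geometric_of_lt_one (norm_nonneg q) hq) fun n ↦ by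
    rw [norm_pow]
    exact pow_le_pow_of_le_one (norm_nonneg q) hq.le (he n)

lemma summable_pow_pentagonal_add {q : ℂ} (hq : ‖q‖ < 1) (k : ℕ → ℕ) :
    Summable fun n ↦ q ^ ((n + 1) * (3 * (n + 1) - 1) / 2 + k n) :=
  summable_pow_of_le hq fun n ↦ (Nat.le_succ n).trans ((le_pentagonal n).trans le_self_add)

lemma summable_one_sub_pow_mul_pow_pentagonal {q : ℂ} (hq : ‖q‖ < 1) :
    Summable fun n : ℕ ↦ (1 - q ^ (n + 1)) * q ^ ((n + 1) * (3 * (n + 1) - 1) / 2) :=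
  ((summable_pow_pentagonal_add hq 0).sub (summable_pow_pentagonal_add hq (· + 1))).congr
    fun n ↦ by simp only [Pi.zero_apply, add_zero, pow_add]; ring

lemma sign_mul_zpow_pentagonal_natCast_succ (q : ℂ) (n : ℕ) :
    ((((n + 1 : ℕ) : ℤ)).sign : ℂ) * q ^ (((n + 1 : ℕ) : ℤ) * (3 * ((n + 1 : ℕ) : ℤ) - 1) / 2)
      = q ^ ((n + 1) * (3 * (n + 1) - 1) / 2) := by
  rw [Nat.cast_succ, int_pentagonal_natCast, Int.sign_natCast_add_one, zpow_natCast]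
  simp

lemma sign_mul_zpow_pentagonal_neg (q : ℂ) (n : ℕ) :
    ((-((n : ℤ) + 1)).sign : ℂ) * q ^ (-((n : ℤ) + 1) * (3 * -((n : ℤ) + 1) - 1) / 2)
      = -q ^ ((n + 1) * (3 * (n + 1) - 1) / 2 + (n + 1)) := by
  rw [int_pentagonal_neg, Int.sign_neg, Int.sign_natCast_add_one, zpow_natCast]
  push_cast
  ring

theorem tsum_sign_mul_pow_pentagonal {q : ℂ} (hq : ‖q‖ < 1) :
    ∑' m : ℤ, (m.sign : ℂ) * q ^ (m * (3 * m - 1) / 2)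
      = ∑' n : ℕ, (1 - q ^ (n + 1)) * q ^ ((n + 1) * (3 * (n + 1) - 1) / 2) := by
  have hpos : Summable fun n ↦ q ^ ((n + 1) * (3 * (n + 1) - 1) / 2) := by
    simpa using summable_pow_pentagonal_add hq 0
  have hneg := summable_pow_pentagonal_add hq (· + 1)
  have hnat : HasSum (fun n : ℕ ↦ ((n : ℤ).sign : ℂ) * q ^ ((n : ℤ) * (3 * n - 1) / 2))
      (∑' n, q ^ ((n + 1) * (3 * (n + 1) - 1) / 2)) :=
    (hasSum_nat_add_iff' 1).mp <| by
      simpa only [sign_mul_zpow_pentagonal_natCast_succ, range_one, sum_singleton, Nat.cast_zero,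
        Int.sign_zero, Int.cast_zero, zero_mul, sub_zero] using hpos.hasSum
  have hnegs : HasSum (fun n : ℕ ↦ ((-((n : ℤ) + 1)).sign : ℂ) *
      q ^ (-((n : ℤ) + 1) * (3 * -((n : ℤ) + 1) - 1) / 2))
      (-∑' n, q ^ ((n + 1) * (3 * (n + 1) - 1) / 2 + (n + 1))) := by
    simpa only [sign_mul_zpow_pentagonal_neg] using hneg.hasSum.neg
  rw [(HasSum.of_nat_of_neg_add_one
      (f := fun m : ℤ ↦ (m.sign : ℂ) * q ^ (m * (3 * m - 1) / 2)) hnat hnegs).tsum_eq,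
    ← sub_eq_add_neg, ← hpos.tsum_sub hneg]
  exact tsum_congr fun n ↦ by rw [pow_add]; ring

noncomputable def signedPochSum (q x : ℂ) (N : ℕ) : ℂ :=
  ∑ k ∈ range N, (-x) ^ k * qPoch (-q) q k

lemma signedPochSum_functional_eq (q x : ℂ) (N : ℕ) :
    (1 + x) * signedPochSum q x N + q * x * signedPochSum q (q * x) (N + 1)
      = 1 - (-x) ^ N * (1 - x * q ^ (N + 1)) * qPoch (-q) q N := by
  induction N with
  | zero => simp [signedPochSum, qPoch, mul_comm]
  | succ N ih =>
    unfold signedPochSum at ih ⊢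
    rw [sum_range_succ (fun k ↦ (-x) ^ k * qPoch (-q) q k) N,
      sum_range_succ (fun k ↦ (-(q * x)) ^ k * qPoch (-q) q k) (N + 1), qPoch_succ _ _ N]
    linear_combination ih

lemma signedPochSum_recurrence (q : ℂ) (N : ℕ) :
    (1 + q ^ (N + 1)) * signedPochSum q (q ^ (N + 1)) N
        + q ^ (N + 2) * signedPochSum q (q ^ (N + 2)) (N + 1)
      = 1 - (-1) ^ N * q ^ (N * (N + 1)) * (1 - q ^ (N + 1)) * qPoch (-q) q (N + 1) := by
  have h := signedPochSum_functional_eq q (q ^ (N + 1)) N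
  rw [← pow_succ', neg_pow, ← pow_mul] at h
  rw [qPoch_succ]
  linear_combination h

noncomputable def pentagonalRemainder (q : ℂ) (N : ℕ) : ℂ :=
  (-1) ^ (N + 1) * q ^ ((N + 1) * (N + 2) / 2) * signedPochSum q (q ^ (N + 1)) N / qPoch (-q) q N

lemma pentagonalRemainder_zero (q : ℂ) : pentagonalRemainder q 0 = 0 := by
  simp [pentagonalRemainder, signedPochSum]

lemma pentagonal_term_eq {q : ℂ} (hq : ‖q‖ < 1) (N : ℕ) :
    (1 - q ^ (N + 1)) * q ^ ((N + 1) * (3 * (N + 1) - 1) / 2)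
      = -((-1) ^ (N + 1) * q ^ ((N + 1) * (N + 2) / 2) / qPoch (-q) q (N + 1))
        + pentagonalRemainder q N - pentagonalRemainder q (N + 1) := by
  have hP := qPoch_ne_zero (norm_neg q ▸ hq) hq.le N
  have hP₁ := qPoch_ne_zero (norm_neg q ▸ hq) hq.le (N + 1)
  -- `ring` cannot simplify `(-1) ^ N * (-1) ^ N` on its own.
  have hsign : (-1 : ℂ) ^ N * (-1) ^ N = 1 := by rw [← mul_pow]; norm_num
  have hsucc : qPoch (-q) q (N + 1) = qPoch (-q) q N * (1 + q ^ (N + 1)) := by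
    rw [qPoch_succ]; ring
  have hrec := signedPochSum_recurrence q N
  set t := q ^ ((N + 1) * (N + 2) / 2)
  unfold pentagonalRemainder
  set H := signedPochSum q (q ^ (N + 1)) N
  rw [pentagonal_eq_triangle_add, triangle_succ, pow_add, pow_add q _ (N + 2)]
  field_simp
  linear_combination ((-1) ^ N * t * qPoch (-q) q N) * hrec
    - ((1 - q ^ (N + 1)) * t * q ^ (N * (N + 1)) * qPoch (-q) q (N + 1) * qPoch (-q) q N) * hsign
    + ((-1) ^ N * t * H) * hsucc

lemma sum_range_neg_eq_sum_range_pentagonal_add_remainder {q : ℂ} (hq : ‖q‖ < 1) (N : ℕ) :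
    ∑ n ∈ range N, -((-1) ^ (n + 1) * q ^ ((n + 1) * (n + 2) / 2) / qPoch (-q) q (n + 1))
      = ∑ n ∈ range N, (1 - q ^ (n + 1)) * q ^ ((n + 1) * (3 * (n + 1) - 1) / 2)
        + pentagonalRemainder q N := by
  induction N with
  | zero => simp [pentagonalRemainder_zero]
  | succ N ih =>
    rw [sum_range_succ, sum_range_succ, ih, pentagonal_term_eq hq N]
    ring

lemma eventually_pow_triangle_mul_pow_le {r : ℝ} (hr₀ : 0 ≤ r) (hr₁ : r < 1) {C : ℝ}
    (hC : 0 ≤ C) : ∀ᶠ N in atTop, r ^ ((N + 1) * (N + 2) / 2) * C ^ N ≤ (1 / 2) ^ N := by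
  obtain ⟨M, hM⟩ := exists_pow_lt_of_lt_one (show 0 < 1 / (2 * (C + 1)) by positivity) hr₁
  have hMC : r ^ M * C ≤ 1 / 2 :=
    calc r ^ M * C ≤ 1 / (2 * (C + 1)) * (C + 1) := by gcongr; linarith
      _ = 1 / 2 := by field_simp
  filter_upwards [eventually_ge_atTop (2 * M)] with N hN
  calc r ^ ((N + 1) * (N + 2) / 2) * C ^ N ≤ r ^ (M * N) * C ^ N :=
        mul_le_mul_of_nonneg_right (pow_le_pow_of_le_one hr₀ hr₁.le
          ((Nat.mul_le_mul_left M N.le_succ).trans (mul_le_triangle (by omega)))) (by positivity)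
    _ = (r ^ M * C) ^ N := by rw [mul_pow, pow_mul]
    _ ≤ (1 / 2) ^ N := by gcongr

lemma norm_signedPochSum_le {q x : ℂ} (hq : ‖q‖ ≤ 1) (hx : ‖x‖ ≤ 1) (N : ℕ) :
    ‖signedPochSum q x N‖ ≤ 2 ^ N :=
  calc ‖signedPochSum q x N‖ ≤ ∑ k ∈ range N, ‖(-x) ^ k * qPoch (-q) q k‖ := norm_sum_le _ _
    _ ≤ ∑ k ∈ range N, (2 : ℝ) ^ k := by
      refine sum_le_sum fun k _ ↦ ?_
      rw [norm_mul, norm_pow, norm_neg, ← one_mul ((2 : ℝ) ^ k)]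
      refine mul_le_mul (pow_le_one₀ (norm_nonneg x) hx) ?_ (norm_nonneg _) zero_le_one
      calc ‖qPoch (-q) q k‖ ≤ (1 + ‖-q‖) ^ k := norm_qPoch_le _ hq k
        _ ≤ 2 ^ k := by gcongr; rw [norm_neg]; linarith
    _ ≤ 2 ^ N := by rw [geom_sum_eq (by norm_num)]; norm_num

lemma tendsto_pentagonalRemainder {q : ℂ} (hq : ‖q‖ < 1) :
    Tendsto (pentagonalRemainder q) atTop (𝓝 0) := by
  have hr : 0 < 1 - ‖q‖ := sub_pos.2 hq
  refine squeeze_zero_norm' ?_ (tendsto_pow_atTop_nhds_zero_of_lt_one (by norm_num) one_half_lt_one)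
  filter_upwards [eventually_pow_triangle_mul_pow_le (norm_nonneg q) hq
    (div_nonneg zero_le_two hr.le)] with N hN
  refine le_trans ?_ hN
  rw [pentagonalRemainder, norm_div, norm_mul, norm_mul, norm_pow, norm_pow, norm_neg, norm_one,
    one_pow, one_mul, div_pow, ← mul_div_assoc]
  gcongr
  · exact norm_signedPochSum_le hq.le (by rw [norm_pow]; exact pow_le_one₀ (norm_nonneg q) hq.le) N
  · simpa using one_sub_norm_pow_le_norm_qPoch (a := -q) (norm_neg q ▸ hq.le) hq.le N

lemma summable_neg_one_pow_mul_pow_triangle_div_qPoch {q : ℂ} (hq : ‖q‖ < 1) :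
    Summable fun n : ℕ ↦ (-1) ^ (n + 1) * q ^ ((n + 1) * (n + 2) / 2) / qPoch (-q) q (n + 1) := by
  have hr : 0 < 1 - ‖q‖ := sub_pos.2 hq
  refine Summable.of_norm_bounded_eventually_nat
    ((summable_geometric_of_lt_one (by norm_num) one_half_lt_one).mul_left (1 - ‖q‖)⁻¹) ?_
  filter_upwards [eventually_pow_triangle_mul_pow_le (norm_nonneg q) hq
    (inv_nonneg.2 hr.le)] with n hn
  calc ‖(-1) ^ (n + 1) * q ^ ((n + 1) * (n + 2) / 2) / qPoch (-q) q (n + 1)‖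
      ≤ ‖q‖ ^ ((n + 1) * (n + 2) / 2) / (1 - ‖q‖) ^ (n + 1) := by
        rw [norm_div, norm_mul, norm_pow, norm_pow, norm_neg, norm_one, one_pow, one_mul]
        gcongr
        simpa using one_sub_norm_pow_le_norm_qPoch (a := -q) (norm_neg q ▸ hq.le) hq.le (n + 1)
    _ = (1 - ‖q‖)⁻¹ * (‖q‖ ^ ((n + 1) * (n + 2) / 2) * (1 - ‖q‖)⁻¹ ^ n) := by
        rw [pow_succ, inv_pow]; field_simp
    _ ≤ (1 - ‖q‖)⁻¹ * (1 / 2) ^ n := by gcongr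

theorem hasSum_neg_neg_one_pow_mul_pow_triangle_div_qPoch {q : ℂ} (hq : ‖q‖ < 1) :
    HasSum (fun n : ℕ ↦ -((-1) ^ (n + 1) * q ^ ((n + 1) * (n + 2) / 2) / qPoch (-q) q (n + 1)))
      (∑' n : ℕ, (1 - q ^ (n + 1)) * q ^ ((n + 1) * (3 * (n + 1) - 1) / 2)) := by
  rw [(summable_neg_one_pow_mul_pow_triangle_div_qPoch hq).neg.hasSum_iff_tendsto_nat,
    funext (sum_range_neg_eq_sum_range_pentagonal_add_remainder hq), ← add_zero (tsum _)]
  exact (summable_one_sub_pow_mul_pow_pentagonal hq).hasSum.tendsto_sum_nat.add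
    (tendsto_pentagonalRemainder hq)

/-- For |q|<1, `∑_{n∈ℤ} sgn(n) q^{n(3n-1)/2} = -∑_{n≥1} (-1)^n q^{n(n+1)/2}/(-q;q)_n`,
where the left side equals `∑_{n≥1} (1-q^n) q^{n(3n-1)/2}`. -/
theorem stmt_3 (q : ℂ) (hq : ‖q‖ < 1) :
    (∑' m : ℤ, (m.sign : ℂ) * q ^ (m * (3 * m - 1) / 2)
        = ∑' n : ℕ, (1 - q ^ (n + 1)) * q ^ ((n + 1) * (3 * (n + 1) - 1) / 2)) ∧
    ∑' m : ℤ, (m.sign : ℂ) * q ^ (m * (3 * m - 1) / 2)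
      = -∑' n : ℕ, (-1 : ℂ) ^ (n + 1) * q ^ ((n + 1) * (n + 2) / 2) / qPoch (-q) q (n + 1) := by
  have hsign := tsum_sign_mul_pow_pentagonal hq
  refine ⟨hsign, ?_⟩
  rw [hsign, ← tsum_neg, (hasSum_neg_neg_one_pow_mul_pow_triangle_div_qPoch hq).tsum_eq]
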